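/- The exponential integral satisfies e^z E₁(z) = Σ_{n=0}^{∞} (1/(z)_{n+1}) ∫₀^∞ (-t)_n e^{-t} dt for Re(z) > 0, where the series converges; equivalently e^z E₁(z) = Σ_{n=0}^{∞} ((-1)^n/(z)_{n+1}) Σ_{ν=0}^{n} S¹(n,ν) ν!. -/

import Mathlib

open Nat Filter MeasureTheory

noncomputable def poch (z : ℂ) (m : ℕ) : ℂ := ∏ i ∈ Finset.range m, (z + i)

def S1 : ℕ → ℕ → ℤ
  | 0, 0 => 1
  | 0, _ + 1 => 0
  | n + 1, 0 => -(n : ℤ) * S1 n 0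
  | n + 1, k + 1 => S1 n k - (n : ℤ) * S1 n (k + 1)

noncomputable def E1 (z : ℂ) : ℂ :=
  ∫ t in Set.Ioi (0 : ℝ), Complex.exp (-(z + t)) / (z + t)

/-
Put `R_N(t) = e^{-t} (-t)_N / ((z + t) (z)_N)`. Then `R_0` is the integrand of `e^z E₁(z)`, and
since `(z + n) - (-t + n) = z + t`, the difference `R_n - R_{n+1} = e^{-t} (-t)_n / (z)_{n+1}` is
the `n`-th integrand of the series, so the `N`-th partial sum is `∫ R_0 - ∫ R_N`.

With `x = Re z`, one has `|(z)_N| ≥ (x)_N` and `|(-t)_N| ≤ (1 + t 2^t / x) (x)_N`, which gives the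
majorant `e^{-t} (1 + t 2^t / x) / x`, integrable because `2 < e`. Applying the same bound with
`x / 2` in place of `x` and Euler's limit formula for `Γ` shows `R_N(t) → 0`, so `∫ R_N → 0` by
dominated convergence. The second series is the first one termwise, because
`(-t)_n = (-1)^n ∑ S¹(n, ν) t^ν` and `∫₀^∞ t^ν e^{-t} dt = ν!`.
-/

open Set Polynomial Real

theorem S1_eq_coeff_descPochhammer (n k : ℕ) : S1 n k = (descPochhammer ℤ n).coeff k := by
  induction n generalizing k with
  | zero => cases k <;> simp [S1, coeff_one]
  | succ n ih =>
    rw [descPochhammer_succ_right, ← C_eq_natCast]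
    cases k with
    | zero => simp [S1, ih, mul_comm]
    | succ k => rw [coeff_mul_X_sub_C, S1, ih, ih, mul_comm]

theorem coeff_descPochhammer_eq_S1 (R : Type*) [CommRing R] (n k : ℕ) :
    (descPochhammer R n).coeff k = S1 n k := by
  rw [← descPochhammer_map (Int.castRingHom R), coeff_map, S1_eq_coeff_descPochhammer]
  rfl

theorem prod_range_neg_add_eq_descPochhammer {R : Type*} [CommRing R] (n : ℕ) (t : R) :
    ∏ i ∈ Finset.range n, (-t + i) = (-1) ^ n * (descPochhammer R n).eval t := by
  rw [descPochhammer_eval_eq_prod_range]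
  simpa [neg_add_eq_sub] using Finset.prod_neg (s := Finset.range n) fun i : ℕ => t - i

theorem integrableOn_pow_mul_exp_neg_mul (k : ℕ) {b : ℝ} (hb : 0 < b) :
    IntegrableOn (fun t : ℝ => t ^ k * exp (-b * t)) (Ioi 0) := by
  simpa using integrableOn_rpow_mul_exp_neg_mul_rpow (s := k) (p := 1)
    (by linarith [k.cast_nonneg (α := ℝ)]) one_pos hb

theorem integral_pow_mul_exp_neg (k : ℕ) : ∫ t in Ioi (0 : ℝ), t ^ k * exp (-t) = k ! := by
  simpa [← Real.Gamma_nat_eq_factorial] using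
    integral_rpow_mul_exp_neg_mul_Ioi (a := k + 1) (by positivity) one_pos

theorem integral_eval_mul_exp_neg {p : ℝ[X]} {N : ℕ} (hp : p.natDegree < N) :
    ∫ t in Ioi (0 : ℝ), p.eval t * exp (-t) = ∑ k ∈ Finset.range N, p.coeff k * k ! := by
  simp_rw [eval_eq_sum_range' hp, Finset.sum_mul, mul_assoc]
  rw [integral_finsetSum _ fun k _ => by
    simpa using (integrableOn_pow_mul_exp_neg_mul k one_pos).const_mul (p.coeff k)]
  simp_rw [integral_const_mul, integral_pow_mul_exp_neg]

theorem integral_prod_neg_add_mul_exp_neg (n : ℕ) :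
    ∫ t in Ioi (0 : ℝ), (∏ i ∈ Finset.range n, (-t + i)) * exp (-t) =
      (-1) ^ n * ∑ ν ∈ Finset.range (n + 1), (S1 n ν : ℝ) * ν ! := by
  simp_rw [prod_range_neg_add_eq_descPochhammer, mul_assoc, integral_const_mul,
    integral_eval_mul_exp_neg (p := descPochhammer ℝ n) (N := n + 1) (by simp),
    coeff_descPochhammer_eq_S1]

theorem poch_succ (z : ℂ) (n : ℕ) : poch z (n + 1) = poch z n * (z + n) :=
  Finset.prod_range_succ _ _

theorem poch_ne_zero {z : ℂ} (hz : ∀ i : ℕ, z + i ≠ 0) (n : ℕ) : poch z n ≠ 0 :=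
  Finset.prod_ne_zero_iff.mpr fun i _ => hz i

theorem prod_re_add_le_norm_poch {z : ℂ} (hz : 0 ≤ z.re) (N : ℕ) :
    ∏ i ∈ Finset.range N, (z.re + i) ≤ ‖poch z N‖ := by
  rw [poch, norm_prod]
  exact Finset.prod_le_prod (fun i _ => by positivity) fun i _ => by
    simpa using Complex.re_le_norm (z + i)

-- The factors with `i + 1 ≤ ⌊t⌋` are at most `⌊t⌋ - i` and build up a binomial coefficient;
-- the others are at most `i + 1`.
theorem prod_abs_sub_succ_le_choose_mul_factorial {t : ℝ} (ht : 0 ≤ t) (N : ℕ) :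
    ∏ i ∈ Finset.range N, |t - (i + 1)| ≤ (⌊t⌋₊.choose (min N ⌊t⌋₊) : ℝ) * N ! := by
  set m := ⌊t⌋₊
  have htm : t < m + 1 := Nat.lt_floor_add_one t
  induction N with
  | zero => simp
  | succ N ih =>
    rw [Finset.prod_range_succ, Nat.factorial_succ, Nat.cast_mul, Nat.cast_succ]
    rcases lt_or_ge N m with hNm | hNm
    · have hNm' : (N : ℝ) + 1 ≤ m := by exact_mod_cast hNm
      have hfac : |t - (N + 1)| ≤ m - N := by
        rw [abs_of_nonneg (by linarith [Nat.floor_le ht])]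
        linarith
      have hchoose : (m.choose (N + 1) : ℝ) * (N + 1) = m.choose N * (m - N) := by
        rw [← Nat.cast_sub hNm.le]
        exact_mod_cast Nat.choose_succ_right_eq m N
      rw [min_eq_left hNm.le] at ih
      rw [min_eq_left hNm]
      calc _ ≤ (m.choose N * N ! : ℝ) * (m - N) := mul_le_mul ih hfac (abs_nonneg _) (by positivity)
        _ = _ := by linear_combination (-(N ! : ℝ)) * hchoose
    · have hmN : (m : ℝ) ≤ N := by exact_mod_cast hNm
      have hfac : |t - (N + 1)| ≤ N + 1 := abs_le.mpr ⟨by linarith, by linarith⟩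
      rw [min_eq_right hNm] at ih
      rw [min_eq_right (by omega)]
      calc _ ≤ (m.choose m * N ! : ℝ) * (N + 1) := mul_le_mul ih hfac (abs_nonneg _) (by positivity)
        _ = _ := by ring

theorem prod_abs_sub_succ_le {t : ℝ} (ht : 0 ≤ t) (N : ℕ) :
    ∏ i ∈ Finset.range N, |t - (i + 1)| ≤ 2 ^ t * N ! := by
  refine (prod_abs_sub_succ_le_choose_mul_factorial ht N).trans
    (mul_le_mul_of_nonneg_right ?_ (by positivity))
  calc (⌊t⌋₊.choose (min N ⌊t⌋₊) : ℝ) ≤ 2 ^ ⌊t⌋₊ := by exact_mod_cast Nat.choose_le_two_pow _ _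
    _ ≤ 2 ^ t := by
      rw [← Real.rpow_natCast]
      exact Real.rpow_le_rpow_of_exponent_le one_le_two (Nat.floor_le ht)

theorem prod_abs_sub_le_mul_prod_add {x t : ℝ} (hx : 0 < x) (ht : 0 ≤ t) (N : ℕ) :
    ∏ i ∈ Finset.range N, |t - i| ≤ (1 + t * 2 ^ t / x) * ∏ i ∈ Finset.range N, (x + i) := by
  cases N with
  | zero =>
    rw [Finset.prod_range_zero, Finset.prod_range_zero, mul_one, le_add_iff_nonneg_right]
    positivity
  | succ N =>
    have hfac : (N ! : ℝ) ≤ ∏ i ∈ Finset.range N, (x + (i + 1 : ℕ)) := by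
      rw [← Finset.prod_range_add_one_eq_factorial, Nat.cast_prod]
      exact Finset.prod_le_prod (fun i _ => by positivity) fun i _ => by push_cast; linarith
    rw [Finset.prod_range_succ', Finset.prod_range_succ']
    push_cast at hfac ⊢
    rw [sub_zero, abs_of_nonneg ht, add_zero]
    calc (∏ i ∈ Finset.range N, |t - (i + 1)|) * t ≤ (2 ^ t * N !) * t :=
          mul_le_mul_of_nonneg_right (prod_abs_sub_succ_le ht N) ht
      _ ≤ t * 2 ^ t * ∏ i ∈ Finset.range N, (x + (i + 1)) := by
          rw [mul_comm (2 ^ t * _), ← mul_assoc]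
          gcongr
      _ = (t * 2 ^ t / x) * ((∏ i ∈ Finset.range N, (x + (i + 1))) * x) := by
          field_simp
      _ ≤ (1 + t * 2 ^ t / x) * ((∏ i ∈ Finset.range N, (x + (i + 1))) * x) := by
          gcongr
          linarith

-- Euler's limit formula: the ratio at `n + 1` is `n ^ (a - b) * GammaSeq b n / GammaSeq a n`.
theorem tendsto_prod_add_div_prod_add {a b : ℝ} (ha : 0 < a) (hab : a < b) :
    Tendsto (fun N => (∏ i ∈ Finset.range N, (a + i)) / ∏ i ∈ Finset.range N, (b + i))
      atTop (nhds 0) := by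
  rw [← tendsto_add_atTop_iff_nat 1]
  have hlim := ((Real.GammaSeq_tendsto_Gamma b).div (Real.GammaSeq_tendsto_Gamma a)
    (Real.Gamma_pos_of_pos ha).ne').mul
    ((tendsto_rpow_neg_atTop (sub_pos.mpr hab)).comp tendsto_natCast_atTop_atTop)
  rw [mul_zero] at hlim
  refine hlim.congr' ?_
  filter_upwards [eventually_gt_atTop 0] with n hn
  have hn' : (0 : ℝ) < n := by exact_mod_cast hn
  have hb : ∏ i ∈ Finset.range (n + 1), (b + i) ≠ 0 :=
    Finset.prod_ne_zero_iff.mpr fun i _ => (by linarith [i.cast_nonneg (α := ℝ)] : 0 < b + i).ne'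
  have ha' : ∏ i ∈ Finset.range (n + 1), (a + i) ≠ 0 :=
    Finset.prod_ne_zero_iff.mpr fun i _ => by positivity
  have hfac : (n ! : ℝ) ≠ 0 := by positivity
  simp only [Pi.div_apply, Real.GammaSeq, Function.comp, neg_sub]
  rw [Real.rpow_sub hn']
  field_simp

theorem tendsto_prod_abs_sub_div_prod_add {x t : ℝ} (hx : 0 < x) (ht : 0 ≤ t) :
    Tendsto (fun N => (∏ i ∈ Finset.range N, |t - i|) / ∏ i ∈ Finset.range N, (x + i))
      atTop (nhds 0) := by
  have hlim := (tendsto_prod_add_div_prod_add (half_pos hx) (half_lt_self hx)).const_mul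
    (1 + t * 2 ^ t / (x / 2))
  rw [mul_zero] at hlim
  refine squeeze_zero (fun N => by positivity) (fun N => ?_) hlim
  rw [mul_div_assoc']
  gcongr
  exact prod_abs_sub_le_mul_prod_add (half_pos hx) ht N

theorem integrableOn_mul_two_rpow_mul_exp_neg :
    IntegrableOn (fun t : ℝ => t * 2 ^ t * exp (-t)) (Ioi 0) := by
  have hb : 0 < 1 - Real.log 2 := by linarith [Real.log_two_lt_d9]
  refine (integrableOn_pow_mul_exp_neg_mul 1 hb).congr_fun (fun t _ => ?_) measurableSet_Ioi
  rw [Real.rpow_def_of_pos two_pos, mul_assoc, ← Real.exp_add]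
  ring_nf

noncomputable def expIntegralRemainder (z : ℂ) (N : ℕ) (t : ℝ) : ℂ :=
  Real.exp (-t) * poch (-t) N / ((z + t) * poch z N)

theorem measurable_expIntegralRemainder (z : ℂ) (N : ℕ) :
    Measurable (expIntegralRemainder z N) := by
  unfold expIntegralRemainder poch
  fun_prop

theorem norm_poch_neg (t : ℝ) (N : ℕ) : ‖poch (-t) N‖ = ∏ i ∈ Finset.range N, |t - i| := by
  rw [poch, norm_prod]
  refine Finset.prod_congr rfl fun i _ => ?_
  rw [show -(t : ℂ) + i = ((i - t : ℝ) : ℂ) by push_cast; ring, Complex.norm_real, Real.norm_eq_abs,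
    abs_sub_comm]

theorem norm_expIntegralRemainder_le_ratio {z : ℂ} (hz : 0 < z.re) {t : ℝ} (ht : 0 ≤ t) (N : ℕ) :
    ‖expIntegralRemainder z N t‖ ≤
      exp (-t) / z.re * ((∏ i ∈ Finset.range N, |t - i|) / ∏ i ∈ Finset.range N, (z.re + i)) := by
  have hzt : z.re ≤ ‖z + t‖ := (Complex.re_le_norm (z + t)).trans' (by simpa using ht)
  rw [expIntegralRemainder, norm_div, norm_mul, norm_mul, Complex.norm_real, Real.norm_of_nonneg
    (exp_pos _).le, norm_poch_neg, div_mul_div_comm (exp (-t))]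
  have hpoch := prod_re_add_le_norm_poch hz.le N
  gcongr

theorem norm_expIntegralRemainder_le {z : ℂ} (hz : 0 < z.re) {t : ℝ} (ht : 0 ≤ t)
    (N : ℕ) : ‖expIntegralRemainder z N t‖ ≤ exp (-t) / z.re * (1 + t * 2 ^ t / z.re) := by
  refine (norm_expIntegralRemainder_le_ratio hz ht N).trans
    (mul_le_mul_of_nonneg_left ?_ (by positivity))
  rw [div_le_iff₀ (Finset.prod_pos fun i _ => by positivity)]
  exact prod_abs_sub_le_mul_prod_add hz ht N

theorem integrableOn_exp_neg_div_mul_one_add (x : ℝ) :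
    IntegrableOn (fun t : ℝ => exp (-t) / x * (1 + t * 2 ^ t / x)) (Ioi 0) := by
  refine IntegrableOn.congr_fun (((exp_neg_integrableOn_Ioi 0 one_pos).add
    (integrableOn_mul_two_rpow_mul_exp_neg.div_const x)).div_const x)
    (fun t _ => ?_) measurableSet_Ioi
  simp only [Pi.add_apply, neg_one_mul]
  ring

theorem integrableOn_expIntegralRemainder {z : ℂ} (hz : 0 < z.re) (N : ℕ) :
    IntegrableOn (expIntegralRemainder z N) (Ioi 0) :=
  (integrableOn_exp_neg_div_mul_one_add z.re).mono'
    (measurable_expIntegralRemainder z N).aestronglyMeasurable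
    ((ae_restrict_mem measurableSet_Ioi).mono fun _ ht =>
      norm_expIntegralRemainder_le hz (le_of_lt ht) N)

theorem tendsto_integral_expIntegralRemainder {z : ℂ} (hz : 0 < z.re) :
    Tendsto (fun N => ∫ t in Ioi 0, expIntegralRemainder z N t) atTop (nhds 0) := by
  have hlim := tendsto_integral_of_dominated_convergence (f := fun _ => 0) _
    (fun N => (measurable_expIntegralRemainder z N).aestronglyMeasurable)
    (integrableOn_exp_neg_div_mul_one_add z.re)
    (fun N => (ae_restrict_mem measurableSet_Ioi).mono fun _ ht =>
      norm_expIntegralRemainder_le hz (le_of_lt ht) N)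
    ((ae_restrict_mem measurableSet_Ioi).mono fun t ht => ?_)
  · simpa using hlim
  refine squeeze_zero_norm (norm_expIntegralRemainder_le_ratio hz (le_of_lt ht)) ?_
  simpa using (tendsto_prod_abs_sub_div_prod_add hz (le_of_lt ht)).const_mul (exp (-t) / z.re)

theorem expIntegralRemainder_sub_succ {z : ℂ} {t : ℝ} (hzt : z + t ≠ 0) (hz : ∀ i : ℕ, z + i ≠ 0)
    (n : ℕ) : expIntegralRemainder z n t - expIntegralRemainder z (n + 1) t =
      1 / poch z (n + 1) * (((∏ i ∈ Finset.range n, (-t + i)) * exp (-t) : ℝ) : ℂ) := by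
  have hpoch := poch_ne_zero hz n
  have hzn := hz n
  rw [expIntegralRemainder, expIntegralRemainder, poch_succ, poch_succ, poch]
  push_cast
  field_simp
  ring

theorem integral_expIntegralRemainder_sub_succ {z : ℂ} (hz : 0 < z.re) (n : ℕ) :
    (∫ t in Ioi 0, expIntegralRemainder z n t) - ∫ t in Ioi 0, expIntegralRemainder z (n + 1) t =
      1 / poch z (n + 1) *
        ((∫ t in Ioi (0 : ℝ), (∏ i ∈ Finset.range n, (-t + i)) * exp (-t) : ℝ) : ℂ) := by
  have hre : ∀ {w : ℂ}, 0 < w.re → w ≠ 0 := fun hw h => by simp [h] at hw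
  rw [← integral_sub (integrableOn_expIntegralRemainder hz n)
    (integrableOn_expIntegralRemainder hz (n + 1)), ← integral_complex_ofReal, ← integral_const_mul]
  refine setIntegral_congr_fun measurableSet_Ioi fun t ht => ?_
  exact expIntegralRemainder_sub_succ
    (hre (by rw [Complex.add_re, Complex.ofReal_re]; linarith [ht.out]))
    (fun i => hre (by rw [Complex.add_re, Complex.natCast_re]; positivity)) n

theorem exp_mul_E1 (z : ℂ) : Complex.exp z * E1 z = ∫ t in Ioi 0, expIntegralRemainder z 0 t := by
  rw [E1, ← integral_const_mul]
  refine integral_congr_ae (ae_of_all _ fun t => ?_)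
  simp only [expIntegralRemainder, poch, Finset.prod_range_zero, mul_one, Complex.ofReal_exp,
    Complex.ofReal_neg]
  rw [mul_div_assoc', ← Complex.exp_add]
  ring_nf

theorem stmt17 (z : ℂ) (hz : 0 < z.re) :
    Tendsto
      (fun N => ∑ n ∈ Finset.range N,
        (1 / poch z (n + 1)) *
          ((∫ t in Set.Ioi (0 : ℝ),
            (∏ i ∈ Finset.range n, (-t + i)) * Real.exp (-t) : ℝ) : ℂ))
      atTop (nhds (Complex.exp z * E1 z))
    ∧
    Tendsto
      (fun N => ∑ n ∈ Finset.range N,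
        ((-1 : ℂ) ^ n / poch z (n + 1)) *
          ∑ ν ∈ Finset.range (n + 1), (S1 n ν : ℂ) * (ν ! : ℂ))
      atTop (nhds (Complex.exp z * E1 z)) := by
  have hpartial : ∀ N, ∑ n ∈ Finset.range N, 1 / poch z (n + 1) *
      ((∫ t in Ioi (0 : ℝ), (∏ i ∈ Finset.range n, (-t + i)) * exp (-t) : ℝ) : ℂ) =
      (∫ t in Ioi 0, expIntegralRemainder z 0 t) - ∫ t in Ioi 0, expIntegralRemainder z N t := by
    intro N
    rw [← Finset.sum_range_sub' (fun n => ∫ t in Ioi 0, expIntegralRemainder z n t)]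
    exact Finset.sum_congr rfl fun n _ => (integral_expIntegralRemainder_sub_succ hz n).symm
  have hseries : Tendsto (fun N => ∑ n ∈ Finset.range N, 1 / poch z (n + 1) *
      ((∫ t in Ioi (0 : ℝ), (∏ i ∈ Finset.range n, (-t + i)) * exp (-t) : ℝ) : ℂ))
      atTop (nhds (Complex.exp z * E1 z)) := by
    simp_rw [hpartial, exp_mul_E1]
    simpa using tendsto_const_nhds.sub (tendsto_integral_expIntegralRemainder hz)
  refine ⟨hseries, hseries.congr fun N => Finset.sum_congr rfl fun n _ => ?_⟩
  rw [integral_prod_neg_add_mul_exp_neg]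
  push_cast
  ring
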